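/- arXiv:1403.5393 — 14 statements merged into one kernel-verified Lean document; each statement's English description precedes it below -/
import Mathlib

section
/- In an LC-AG-groupoid S (an AG-groupoid satisfying (ab)c = (ba)c), for every subset A of S, (SA)S ⊆ SA. -/
theorem lc_SA_S_subset_SA {S : Type*} [Mul S]
    (inv : ∀ a b c : S, (a * b) * c = (c * b) * a)
    (lc : ∀ a b c : S, (a * b) * c = (b * a) * c) (A : Set S) :
    Set.image2 (· * ·) (Set.image2 (· * ·) Set.univ A) Set.univ ⊆
      Set.image2 (· * ·) Set.univ A := by
  rintro x ⟨_, ⟨s, -, a, ha, rfl⟩, t, -, rfl⟩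
  exact ⟨s * t, trivial, a, ha, show s * t * a = s * a * t from by rw [inv s t a, lc, inv]⟩
end

section
/- In an RC-AG-groupoid S with left identity e (an AG-groupoid satisfying a(bc) = a(cb)), for every subset A of S, S(SA) ⊆ AS. -/
theorem rc_S_SA_subset_AS {S : Type*} [Mul S]
    (inv : ∀ a b c : S, (a * b) * c = (c * b) * a)
    (rc : ∀ a b c : S, a * (b * c) = a * (c * b))
    (e : S) (he : ∀ a : S, e * a = a) (A : Set S) :
    Set.image2 (· * ·) Set.univ (Set.image2 (· * ·) Set.univ A) ⊆
      Set.image2 (· * ·) A Set.univ := by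
  rintro x ⟨s, -, _, ⟨t, -, a, ha, rfl⟩, rfl⟩
  refine ⟨a, ha, s * t, trivial, ?_⟩
  calc a * (s * t) = (e * a) * (s * t) := by rw [he]
    _ = ((s * t) * a) * e := inv _ _ _
    _ = ((a * t) * s) * e := by rw [inv s t a]
    _ = (e * s) * (a * t) := (inv _ _ _).symm
    _ = s * (a * t) := by rw [he]
    _ = s * (t * a) := rc _ _ _
end

section
/- In an LC-AG-groupoid S, for each a ∈ S the set R(a) = (aS)a is a right ideal of S (i.e., R(a)·S ⊆ R(a)), and if R is any right ideal of S containing a with R·R ⊆ R, then R(a) ⊆ R. -/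
theorem lc_minimal_right_ideal {S : Type*} [Mul S]
    (inv : ∀ a b c : S, (a * b) * c = (c * b) * a)
    (lc : ∀ a b c : S, (a * b) * c = (b * a) * c) (a : S) :
    (Set.image2 (· * ·) {z | ∃ x : S, z = (a * x) * a} Set.univ ⊆
      {z | ∃ x : S, z = (a * x) * a}) ∧
    ∀ R : Set S, Set.image2 (· * ·) R Set.univ ⊆ R → a ∈ R →
      Set.image2 (· * ·) R R ⊆ R →
      {z | ∃ x : S, z = (a * x) * a} ⊆ R := by
  constructor
  · rintro w ⟨z, ⟨x, rfl⟩, y, -, rfl⟩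
    refine ⟨y * x, ?_⟩
    calc ((a * x) * a) * y = (y * a) * (a * x) := inv _ _ _
      _ = (a * y) * (a * x) := lc _ _ _
      _ = ((a * x) * y) * a := inv _ _ _
      _ = ((y * x) * a) * a := by rw [inv a x y]
      _ = (a * (y * x)) * a := lc _ _ _
  · rintro R hRS haR hRR w ⟨x, rfl⟩
    have hax : a * x ∈ R := hRS ⟨a, haR, x, trivial, rfl⟩
    exact hRR ⟨a * x, hax, a, haR, rfl⟩
end

section
/- In an RC-AG-groupoid S with left identity e, for each a ∈ S the set a(Sa) = {a·(x·a) : x ∈ S} is a two-sided ideal of S, i.e., S·(a(Sa)) ⊆ a(Sa) and (a(Sa))·S ⊆ a(Sa). -/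
theorem rc_aSa_ideal {S : Type*} [Mul S]
    (inv : ∀ a b c : S, (a * b) * c = (c * b) * a)
    (rc : ∀ a b c : S, a * (b * c) = a * (c * b))
    (e : S) (he : ∀ a : S, e * a = a) (a : S) :
    (Set.image2 (· * ·) Set.univ {z | ∃ x : S, z = a * (x * a)} ⊆
      {z | ∃ x : S, z = a * (x * a)}) ∧
    (Set.image2 (· * ·) {z | ∃ x : S, z = a * (x * a)} Set.univ ⊆
      {z | ∃ x : S, z = a * (x * a)}) := by
  have med : ∀ p q r s : S, (p * q) * (r * s) = (p * r) * (q * s) := by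
    intro p q r s
    calc (p * q) * (r * s) = ((r * s) * q) * p := inv _ _ _
      _ = ((q * s) * r) * p := by rw [inv r s q]
      _ = (p * r) * (q * s) := inv _ _ _
  have L : ∀ p q r : S, p * (q * r) = q * (p * r) := by
    intro p q r
    calc p * (q * r) = (e * p) * (q * r) := by rw [he]
      _ = (e * q) * (p * r) := med _ _ _ _
      _ = q * (p * r) := by rw [he]
  have para : ∀ p q r s : S, (p * q) * (r * s) = (s * r) * (q * p) := by
    intro p q r s
    calc (p * q) * (r * s) = ((r * s) * q) * p := inv _ _ _
      _ = ((r * s) * q) * (e * p) := by rw [he]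
      _ = ((r * s) * e) * (q * p) := med _ _ _ _
      _ = ((e * s) * r) * (q * p) := by rw [inv r s e]
      _ = (s * r) * (q * p) := by rw [he]
  have dup : ∀ p q : S, p * q = (q * p) * e := by
    intro p q
    calc p * q = (e * p) * q := by rw [he]
      _ = (q * p) * e := inv _ _ _
  have h1 : ∀ s x : S, s * (x * a) = a * (s * x) := by
    intro s x
    rw [rc s x a, L s a x]
  constructor
  · rintro z ⟨s, -, w, ⟨x, rfl⟩, rfl⟩
    refine ⟨s * x, ?_⟩
    show s * (a * (x * a)) = a * ((s * x) * a)
    calc s * (a * (x * a)) = a * (s * (x * a)) := L _ _ _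
      _ = a * (a * (s * x)) := by rw [h1]
      _ = a * ((s * x) * a) := rc _ _ _
  · rintro z ⟨w, ⟨x, rfl⟩, s, -, rfl⟩
    refine ⟨x * s, ?_⟩
    show (a * (x * a)) * s = a * ((x * s) * a)
    calc (a * (x * a)) * s = (s * (x * a)) * a := inv _ _ _
      _ = (a * (s * x)) * a := by rw [h1]
      _ = (((s * x) * a) * e) * a := by rw [dup a (s * x)]
      _ = (a * e) * ((s * x) * a) := inv _ _ _
      _ = (a * e) * (a * (s * x)) := rc _ _ _
      _ = (a * a) * (e * (s * x)) := med _ _ _ _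
      _ = (a * a) * (s * x) := by rw [he]
      _ = (x * s) * (a * a) := para _ _ _ _
      _ = a * ((x * s) * a) := L _ _ _
end

section
/- In an RC-AG-groupoid S with left identity e, for each a ∈ S the set (aS)a = {(a·x)·a : x ∈ S} is a two-sided ideal of S, i.e., S·((aS)a) ⊆ (aS)a and ((aS)a)·S ⊆ (aS)a. -/
theorem rc_aS_a_ideal {S : Type*} [Mul S]
    (inv : ∀ a b c : S, (a * b) * c = (c * b) * a)
    (rc : ∀ a b c : S, a * (b * c) = a * (c * b))
    (e : S) (he : ∀ a : S, e * a = a) (a : S) :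
    (Set.image2 (· * ·) Set.univ {z | ∃ x : S, z = (a * x) * a} ⊆
      {z | ∃ x : S, z = (a * x) * a}) ∧
    (Set.image2 (· * ·) {z | ∃ x : S, z = (a * x) * a} Set.univ ⊆
      {z | ∃ x : S, z = (a * x) * a}) := by
  have medial : ∀ p q r s : S, (p * q) * (r * s) = (p * r) * (q * s) := by
    intro p q r s
    rw [inv p q (r * s), inv r s q, inv (q * s) r p]
  have perm : ∀ p q r : S, p * (q * r) = q * (p * r) := by
    intro p q r
    calc p * (q * r) = (e * p) * (q * r) := by rw [he]
      _ = (e * q) * (p * r) := medial e p q r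
      _ = q * (p * r) := by rw [he]
  have comm : ∀ p q : S, p * q = q * p := by
    intro p q
    have h1 : p * q = q * (p * e) := by rw [← he q, rc p e q, he q, perm p q e]
    have h2 : q * p = q * (p * e) := by rw [← he p, rc q e p, he p]
    rw [h1, h2]
  have assoc : ∀ p q r : S, (p * q) * r = p * (q * r) := by
    intro p q r
    rw [inv p q r, comm (r * q) p, rc p r q]
  letI sg : Semigroup S := { mul := (· * ·), mul_assoc := assoc }
  letI : CommSemigroup S := { sg with mul_comm := comm }
  constructor
  · rintro z ⟨s, -, w, ⟨x, rfl⟩, rfl⟩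
    exact ⟨x * s, by simp only [mul_assoc, mul_comm, mul_left_comm]⟩
  · rintro z ⟨w, ⟨x, rfl⟩, s, -, rfl⟩
    exact ⟨x * s, by simp only [mul_assoc, mul_comm, mul_left_comm]⟩
end

section
/- An LC-AG-groupoid containing a right cancellative element is a commutative semigroup. -/
theorem lc_right_cancellative_comm_semigroup {S : Type*} [Mul S]
    (inv : ∀ a b c : S, (a * b) * c = (c * b) * a)
    (lc : ∀ a b c : S, (a * b) * c = (b * a) * c)
    (x : S) (hx : ∀ a b : S, a * x = b * x → a = b) :
    (∀ a b : S, a * b = b * a) ∧ (∀ a b c : S, (a * b) * c = a * (b * c)) := by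
  have comm : ∀ a b : S, a * b = b * a := fun a b => hx _ _ (lc a b x)
  refine ⟨comm, fun a b c => ?_⟩
  rw [inv, comm (c * b) a, comm c b]
end

section
/- An LC-AG-groupoid with a left identity is a commutative semigroup. -/
theorem lc_left_identity_comm_semigroup {S : Type*} [Mul S]
    (inv : ∀ a b c : S, (a * b) * c = (c * b) * a)
    (lc : ∀ a b c : S, (a * b) * c = (b * a) * c)
    (e : S) (he : ∀ a : S, e * a = a) :
    (∀ a b : S, a * b = b * a) ∧ (∀ a b c : S, (a * b) * c = a * (b * c)) := by
  have comm : ∀ a b : S, a * b = b * a := fun a b => by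
    calc a * b = (e * a) * b := by rw [he]
    _ = (a * e) * b := by rw [lc]
    _ = (b * e) * a := by rw [inv]
    _ = (e * b) * a := by rw [lc]
    _ = b * a := by rw [he]
  exact ⟨comm, fun a b c => by rw [inv, comm (c*b) a, comm c b]⟩
end

section
/- Every LC-AG-groupoid is paramedial: if an AG-groupoid satisfies (ab)c = (ba)c for all a,b,c, then (ab)(cd) = (db)(ca) for all a,b,c,d. -/
theorem lc_paramedial {S : Type*} [Mul S]
    (inv : ∀ a b c : S, (a * b) * c = (c * b) * a)
    (lc : ∀ a b c : S, (a * b) * c = (b * a) * c) :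
    ∀ a b c d : S, (a * b) * (c * d) = (d * b) * (c * a) := by
  have perm : ∀ x y z : S, (x * y) * z = (y * z) * x :=
    fun x y z => (inv x y z).trans (lc z y x)
  intro a b c d
  calc (a * b) * (c * d) = ((c * d) * a) * b := by
        rw [perm a b (c * d), perm b (c * d) a]
    _ = ((a * c) * d) * b := by rw [perm c d a, perm d a c]
    _ = (d * b) * (a * c) := perm (a * c) d b
    _ = ((a * c) * b) * d := by rw [perm d b (a * c), lc b (a * c) d]
    _ = ((c * a) * b) * d := by rw [lc a c b]
    _ = (d * b) * (c * a) := by rw [perm (c * a) b d, lc b d (c * a)]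
end

section
/- Every BC-AG-groupoid is a left nuclear square AG-groupoid: if an AG-groupoid satisfies (ab)c = (ba)c and a(bc) = a(cb) for all a,b,c, then a²(bc) = (a²b)c for all a,b,c, where a² = a·a. -/
theorem bc_left_nuclear_square {S : Type*} [Mul S]
    (inv : ∀ a b c : S, (a * b) * c = (c * b) * a)
    (lc : ∀ a b c : S, (a * b) * c = (b * a) * c)
    (rc : ∀ a b c : S, a * (b * c) = a * (c * b)) :
    ∀ a b c : S, (a * a) * (b * c) = ((a * a) * b) * c := by
  intro a b c
  calc (a * a) * (b * c) = (a * a) * (c * b) := rc _ _ _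
    _ = ((c * b) * a) * a := inv _ _ _
    _ = ((a * b) * c) * a := by rw [inv c b a]
    _ = (a * c) * (a * b) := inv _ _ _
    _ = (c * a) * (a * b) := lc _ _ _
    _ = (c * a) * (b * a) := rc _ _ _
    _ = ((b * a) * a) * c := inv _ _ _
    _ = ((a * a) * b) * c := by rw [inv b a a]
end

section
/- In a BC-AG**-groupoid (an AG-groupoid satisfying (ab)c = (ba)c, a(bc) = a(cb), and a(bc) = b(ac)), if S is middle nuclear square (i.e., (ab²)c = a(b²c) for all a,b,c), then S is right nuclear square (i.e., (ab)c² = a(bc²) for all a,b,c). -/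
theorem bc_agss_middle_imp_right_nuclear {S : Type*} [Mul S]
    (inv : ∀ a b c : S, (a * b) * c = (c * b) * a)
    (lc : ∀ a b c : S, (a * b) * c = (b * a) * c)
    (rc : ∀ a b c : S, a * (b * c) = a * (c * b))
    (ss : ∀ a b c : S, a * (b * c) = b * (a * c))
    (mid : ∀ a b c : S, (a * (b * b)) * c = a * ((b * b) * c)) :
    ∀ a b c : S, (a * b) * (c * c) = a * (b * (c * c)) := by
  intro a b c
  rw [inv a b (c*c), lc, mid, rc, ss]
end

section
/- In a BC-AG**-groupoid, if S is right nuclear square (i.e., (ab)c² = a(bc²) for all a,b,c), then S is middle nuclear square (i.e., (ab²)c = a(b²c) for all a,b,c). -/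
theorem bc_agss_right_imp_middle_nuclear {S : Type*} [Mul S]
    (inv : ∀ a b c : S, (a * b) * c = (c * b) * a)
    (lc : ∀ a b c : S, (a * b) * c = (b * a) * c)
    (rc : ∀ a b c : S, a * (b * c) = a * (c * b))
    (ss : ∀ a b c : S, a * (b * c) = b * (a * c))
    (rn : ∀ a b c : S, (a * b) * (c * c) = a * (b * (c * c))) :
    ∀ a b c : S, (a * (b * b)) * c = a * ((b * b) * c) := by
  intro a b c
  calc (a * (b * b)) * c = (c * (b * b)) * a := inv ..
    _ = ((b * b) * c) * a := lc ..
    _ = (a * c) * (b * b) := inv ..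
    _ = a * (c * (b * b)) := rn ..
    _ = a * ((b * b) * c) := rc ..
end

section
/- A BC-AG-groupoid is left alternative if and only if it is flexible: in an AG-groupoid satisfying (ab)c = (ba)c and a(bc) = a(cb), the identity (aa)b = a(ab) holds for all a,b if and only if (ab)a = a(ba) holds for all a,b. -/
theorem bc_left_alt_iff_flexible {S : Type*} [Mul S]
    (inv : ∀ a b c : S, (a * b) * c = (c * b) * a)
    (lc : ∀ a b c : S, (a * b) * c = (b * a) * c)
    (rc : ∀ a b c : S, a * (b * c) = a * (c * b)) :
    (∀ a b : S, (a * a) * b = a * (a * b)) ↔ (∀ a b : S, (a * b) * a = a * (b * a)) := by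
  constructor
  · intro la a b
    calc (a * b) * a = (b * a) * a := lc a b a
      _ = (a * a) * b := inv b a a
      _ = a * (a * b) := la a b
      _ = a * (b * a) := rc a a b
  · intro fl a b
    calc (a * a) * b = (b * a) * a := inv a a b
      _ = (a * b) * a := lc b a a
      _ = a * (b * a) := fl a b
      _ = a * (a * b) := rc a b a
end

section
/- Every T¹-BC-AG-groupoid is self-dual: if an AG-groupoid satisfies (ab)c = (ba)c, a(bc) = a(cb), and the T¹ condition (ab = cd implies ba = dc), then a(bc) = c(ba) for all a,b,c. -/
theorem t1_bc_self_dual {S : Type*} [Mul S]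
    (inv : ∀ a b c : S, (a * b) * c = (c * b) * a)
    (lc : ∀ a b c : S, (a * b) * c = (b * a) * c)
    (rc : ∀ a b c : S, a * (b * c) = a * (c * b))
    (t1 : ∀ a b c d : S, a * b = c * d → b * a = d * c) :
    ∀ a b c : S, a * (b * c) = c * (b * a) := by
  intro a b c
  have h := t1 _ _ _ _ (inv a b c)
  calc a * (b * c) = a * (c * b) := rc a b c
    _ = c * (a * b) := h.symm
    _ = c * (b * a) := rc c a b
end

section
/- Every BC-AG-3-band is a commutative semigroup: if an AG-groupoid satisfies (ab)c = (ba)c, a(bc) = a(cb), and a·(a·a) = (a·a)·a = a for all a, then it is commutative and associative. -/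
theorem bc_ag3band_comm_semigroup {S : Type*} [Mul S]
    (inv : ∀ a b c : S, (a * b) * c = (c * b) * a)
    (lc : ∀ a b c : S, (a * b) * c = (b * a) * c)
    (rc : ∀ a b c : S, a * (b * c) = a * (c * b))
    (band1 : ∀ a : S, a * (a * a) = a)
    (band2 : ∀ a : S, (a * a) * a = a) :
    (∀ a b : S, a * b = b * a) ∧ (∀ a b c : S, (a * b) * c = a * (b * c)) := by
  have comm : ∀ a b : S, a * b = b * a := by
    intro a b
    calc a * b = (a * b) * ((a * b) * (a * b)) := (band1 _).symm
      _ = (a * b) * ((a * b) * (b * a)) := by rw [rc (a * b) a b]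
      _ = (a * b) * ((b * a) * (b * a)) := by rw [lc a b (b * a)]
      _ = (b * a) * ((b * a) * (b * a)) := lc _ _ _
      _ = b * a := band1 _
  refine ⟨comm, fun a b c => ?_⟩
  calc (a * b) * c = (c * b) * a := inv a b c
    _ = a * (c * b) := comm _ _
    _ = a * (b * c) := rc _ _ _
end
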